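/- The pressure function at t = 1 equals log 2: p(1) = lim_{n→∞} (1/n) log ∑_{ω ∈ {0,1}^n} sup_{x ∈ ⟨ω⟩} exp(ψ_n(x)) = log 2. -/

import Mathlib

/-! With `f x = 1 - cos (2πx)` we have `exp ψ_n x = ∏_{ℓ<n} f (2^ℓ x)` away from the dyadic points
of level `n`. Since `f` is `1`-periodic and `f (x + 1/2) = 2 - f x`, pairing grid points half a
period apart gives the exact identity
`∑_{k<2^m} ∏_{ℓ<n} (w_ℓ + f (2^ℓ (k + x) / 2^m)) = 2^m ∏_{ℓ<n} (w_ℓ + 1)` for `n ≤ m`. At the interval midpoints (`w = 0`, `x = 1/2`) it gives `A n ≥ 2^n`. On the `k`-th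
interval each factor is at most `(1 + ε_ℓ) (f (2^ℓ k / 2^n) + 2π² ε_ℓ)` with `ε_ℓ = 2^(ℓ-n)`, and
`∑ ε_ℓ ≤ 1`, so the identity with `w_ℓ = 2π² ε_ℓ` gives `A n ≤ C 2^n`, the dyadic endpoints adding
exactly `2^(n+1)` in total. Hence `(log A n) / n → log 2`.
-/

noncomputable def psi (x : ℝ) : ℝ := Real.log (1 - Real.cos (2 * Real.pi * x))

noncomputable def psiSum (n : ℕ) (x : ℝ) : ℝ :=
  ∑ ℓ ∈ Finset.range n, psi (Int.fract ((2:ℝ) ^ ℓ * x))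

/-- `A n = ∑_{ω ∈ Σ^n} sup_{x ∈ ⟨ω⟩} exp(ψ_n(x))`. -/
noncomputable def A (n : ℕ) : ENNReal :=
  ∑ k ∈ Finset.range (2^n),
    ⨆ y ∈ Set.Icc ((k:ℝ) / 2^n) ((k+1 : ℝ) / 2^n), ENNReal.ofReal (Real.exp (psiSum n y))

open Real Finset Filter Topology

noncomputable def oneSubCos (x : ℝ) : ℝ := 1 - cos (2 * π * x)

lemma oneSubCos_nonneg (x : ℝ) : 0 ≤ oneSubCos x :=
  sub_nonneg.mpr (cos_le_one _)

lemma oneSubCos_add_intCast (x : ℝ) (z : ℤ) : oneSubCos (x + z) = oneSubCos x := by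
  rw [oneSubCos, mul_add, mul_comm (2 * π) (z : ℝ), cos_add_int_mul_two_pi, oneSubCos]

lemma oneSubCos_add_half (x : ℝ) : oneSubCos (x + 1 / 2) = 2 - oneSubCos x := by
  rw [oneSubCos, oneSubCos, show 2 * π * (x + 1 / 2) = 2 * π * x + π by ring, cos_add_pi]
  ring

lemma oneSubCos_eq_zero_iff {x : ℝ} : oneSubCos x = 0 ↔ ∃ z : ℤ, x = z := by
  rw [oneSubCos, sub_eq_zero, eq_comm, cos_eq_one_iff]
  refine exists_congr fun z => ?_
  rw [mul_comm (2 * π) x, mul_left_inj' (by positivity), eq_comm]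

lemma oneSubCos_eq_two_mul_sin_sq (x : ℝ) : oneSubCos x = 2 * sin (π * x) ^ 2 := by
  rw [oneSubCos, show 2 * π * x = 2 * (π * x) by ring, cos_two_mul_eq_one_sub]
  ring

lemma oneSubCos_le_of_abs_sub_le {x y d ε : ℝ} (hε : 0 < ε) (h : |x - y| ≤ d) :
    oneSubCos x ≤ (1 + ε) * (oneSubCos y + 2 * π ^ 2 * d ^ 2 / ε) := by
  set T := |sin (π * y)|
  set D := π * d
  have hD : 0 ≤ D := mul_nonneg pi_pos.le ((abs_nonneg _).trans h)
  have hsin : |sin (π * x)| ≤ T + D := by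
    have := abs_sin_sub_sin_le (π * x) (π * y)
    rw [← mul_sub, abs_mul, abs_of_pos pi_pos] at this
    linarith [abs_sub_abs_le_abs_sub (sin (π * x)) (sin (π * y)),
      mul_le_mul_of_nonneg_left h pi_pos.le]
  -- `(T + D)² ≤ (1 + ε) T² + (1 + 1/ε) D²` is `(ε T - D)² ≥ 0` divided by `ε`
  have hyoung : (T + D) ^ 2 ≤ (1 + ε) * (T ^ 2 + D ^ 2 / ε) := by
    have : (1 + ε) * (T ^ 2 + D ^ 2 / ε) - (T + D) ^ 2 = (ε * T - D) ^ 2 / ε := by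
      field_simp; ring
    nlinarith [div_nonneg (sq_nonneg (ε * T - D)) hε.le]
  have hsq : sin (π * x) ^ 2 ≤ (T + D) ^ 2 := by
    rw [← sq_abs]; exact pow_le_pow_left₀ (abs_nonneg _) hsin 2
  rw [oneSubCos_eq_two_mul_sin_sq, oneSubCos_eq_two_mul_sin_sq, ← sq_abs (sin (π * y))]
  calc 2 * sin (π * x) ^ 2 ≤ 2 * ((1 + ε) * (T ^ 2 + D ^ 2 / ε)) := by linarith
    _ = (1 + ε) * (2 * T ^ 2 + 2 * π ^ 2 * d ^ 2 / ε) := by ring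

-- `log 0 = 0`, so a vanishing factor contributes `1`, not `0`, to `exp (psiSum n x)`
lemma exp_psi_fract (x : ℝ) :
    exp (psi (Int.fract x)) = if oneSubCos x = 0 then 1 else oneSubCos x := by
  have hper : oneSubCos (Int.fract x) = oneSubCos x := by
    rw [Int.fract, sub_eq_add_neg, ← Int.cast_neg, oneSubCos_add_intCast]
  change exp (log (oneSubCos (Int.fract x))) = _
  rw [hper]
  split_ifs with h
  · rw [h, log_zero, exp_zero]
  · exact exp_log ((oneSubCos_nonneg x).lt_of_ne' h)

lemma exp_psiSum_of_ne_zero {n : ℕ} {x : ℝ} (h : ∀ ℓ < n, oneSubCos (2 ^ ℓ * x) ≠ 0) :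
    exp (psiSum n x) = ∏ ℓ ∈ range n, oneSubCos (2 ^ ℓ * x) := by
  rw [psiSum, exp_sum]
  exact prod_congr rfl fun ℓ hℓ => by rw [exp_psi_fract, if_neg (h ℓ (mem_range.mp hℓ))]

lemma psiSum_succ_natCast_div (n j : ℕ) :
    psiSum (n + 1) ((j : ℝ) / 2 ^ n) = psiSum n ((j : ℝ) / 2 ^ n) := by
  rw [psiSum, sum_range_succ, mul_div_cancel₀ _ (by positivity), Int.fract_natCast]
  simp [psi, psiSum]

lemma prod_add_oneSubCos_add_prod_add_oneSubCos_add_half (n : ℕ) (w : ℕ → ℝ) (x : ℝ) :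
    ∏ ℓ ∈ range (n + 1), (w ℓ + oneSubCos (2 ^ ℓ * x)) +
        ∏ ℓ ∈ range (n + 1), (w ℓ + oneSubCos (2 ^ ℓ * (x + 1 / 2))) =
      2 * (w 0 + 1) * ∏ ℓ ∈ range n, (w (ℓ + 1) + oneSubCos (2 ^ ℓ * (2 * x))) := by
  have hdouble : ∀ ℓ : ℕ, (2 : ℝ) ^ (ℓ + 1) * x = 2 ^ ℓ * (2 * x) := fun ℓ => by ring
  -- for `ℓ ≥ 1` the shift by `2 ^ ℓ / 2` is an integer period
  have hshift : ∀ ℓ : ℕ, oneSubCos (2 ^ (ℓ + 1) * (x + 1 / 2)) = oneSubCos (2 ^ ℓ * (2 * x)) :=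
    fun ℓ => by
      rw [show (2 : ℝ) ^ (ℓ + 1) * (x + 1 / 2) = 2 ^ ℓ * (2 * x) + ((2 ^ ℓ : ℤ) : ℝ) by
        push_cast; ring, oneSubCos_add_intCast]
  simp only [prod_range_succ' _ n, hdouble, hshift, pow_zero, one_mul, oneSubCos_add_half]
  ring

lemma sum_prod_add_oneSubCos {n m : ℕ} (hnm : n ≤ m) (w : ℕ → ℝ) (x : ℝ) :
    ∑ k ∈ range (2 ^ m), ∏ ℓ ∈ range n, (w ℓ + oneSubCos (2 ^ ℓ * ((k + x) / 2 ^ m))) =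
      2 ^ m * ∏ ℓ ∈ range n, (w ℓ + 1) := by
  induction n generalizing m w with
  | zero => simp
  | succ n ih =>
    obtain ⟨m, rfl⟩ : ∃ m', m = m' + 1 := ⟨m - 1, by omega⟩
    -- pair the point of index `k` with that of index `k + 2 ^ m`, half a period further
    have hpair : ∀ k : ℕ, (((2 ^ m + k : ℕ) : ℝ) + x) / 2 ^ (m + 1) =
        (k + x) / 2 ^ (m + 1) + 1 / 2 := fun k => by
      push_cast; field_simp; ring
    have hdouble : ∀ k : ℕ, 2 * ((k + x) / 2 ^ (m + 1)) = (k + x) / 2 ^ m := fun k => by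
      field_simp; ring
    rw [pow_succ, mul_two, sum_range_add, ← sum_add_distrib]
    simp only [hpair, prod_add_oneSubCos_add_prod_add_oneSubCos_add_half, hdouble]
    rw [← mul_sum, ih (by omega), prod_range_succ' _ n]
    ring

lemma exists_eq_intCast_div_of_oneSubCos_eq_zero {ℓ n : ℕ} {y : ℝ} (hℓ : ℓ ≤ n)
    (h : oneSubCos (2 ^ ℓ * y) = 0) : ∃ z : ℤ, y = z / 2 ^ n := by
  obtain ⟨q, hq⟩ := oneSubCos_eq_zero_iff.mp h
  refine ⟨q * 2 ^ (n - ℓ), ?_⟩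
  rw [← Nat.add_sub_cancel' hℓ, pow_add, Nat.add_sub_cancel_left]
  push_cast
  field_simp
  linarith

lemma oneSubCos_midpoint_ne_zero {ℓ n : ℕ} (hℓ : ℓ ≤ n) (k : ℕ) :
    oneSubCos (2 ^ ℓ * ((k + 1 / 2) / 2 ^ n)) ≠ 0 := by
  intro h
  obtain ⟨z, hz⟩ := exists_eq_intCast_div_of_oneSubCos_eq_zero hℓ h
  have : ((2 * k + 1 : ℤ) : ℝ) = ((2 * z : ℤ) : ℝ) := by
    rw [div_left_inj' (by positivity)] at hz
    push_cast; linarith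
  have : (2 * k + 1 : ℤ) = 2 * z := by exact_mod_cast this
  omega

lemma exp_psiSum_midpoint {m n : ℕ} (hm : m ≤ n + 1) (k : ℕ) :
    exp (psiSum m ((k + 1 / 2) / 2 ^ n)) =
      ∏ ℓ ∈ range m, oneSubCos (2 ^ ℓ * ((k + 1 / 2) / 2 ^ n)) :=
  exp_psiSum_of_ne_zero fun _ hℓ => oneSubCos_midpoint_ne_zero (by omega) k

lemma sum_exp_psiSum_midpoint (n : ℕ) :
    ∑ k ∈ range (2 ^ n), exp (psiSum n ((k + 1 / 2) / 2 ^ n)) = 2 ^ n := by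
  simp_rw [exp_psiSum_midpoint n.le_succ]
  simpa using sum_prod_add_oneSubCos le_rfl (fun _ => 0) (1 / 2)

lemma sum_exp_psiSum_succ_midpoint (n : ℕ) :
    ∑ k ∈ range (2 ^ n), exp (psiSum (n + 1) ((k + 1 / 2) / 2 ^ n)) = 2 ^ (n + 1) := by
  have hlast : ∀ k : ℕ, oneSubCos (2 ^ n * ((k + 1 / 2) / 2 ^ n)) = 2 := fun k => by
    rw [mul_div_cancel₀ _ (by positivity), add_comm, ← Int.cast_natCast, oneSubCos_add_intCast,
      ← zero_add (1 / 2 : ℝ), oneSubCos_add_half, oneSubCos, mul_zero, cos_zero]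
    ring
  have hsum := sum_exp_psiSum_midpoint n
  simp_rw [exp_psiSum_midpoint n.le_succ] at hsum
  simp_rw [exp_psiSum_midpoint le_rfl, prod_range_succ, hlast, ← sum_mul, hsum, pow_succ]

lemma Finset.sum_range_two_mul {M : Type*} [AddCommMonoid M] (N : ℕ) (f : ℕ → M) :
    ∑ k ∈ range (2 * N), f k = ∑ i ∈ range N, (f (2 * i) + f (2 * i + 1)) := by
  induction N with
  | zero => simp
  | succ N ih =>
    rw [mul_add, mul_one, sum_range_succ, sum_range_succ, ih, sum_range_succ, add_assoc]

lemma sum_exp_psiSum_dyadic (n : ℕ) :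
    ∑ j ∈ range (2 ^ n + 1), exp (psiSum n (j / 2 ^ n)) = 2 ^ (n + 1) := by
  induction n with
  | zero => norm_num [sum_range_succ, psiSum]
  | succ n ih =>
    have heven : ∀ j : ℕ, ((2 * j : ℕ) : ℝ) / 2 ^ (n + 1) = j / 2 ^ n := fun j => by
      push_cast; field_simp; ring
    have hodd : ∀ j : ℕ, ((2 * j + 1 : ℕ) : ℝ) / 2 ^ (n + 1) = (j + 1 / 2) / 2 ^ n := fun j => by
      push_cast; field_simp; ring
    rw [pow_succ, mul_comm, sum_range_succ, sum_range_two_mul]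
    simp_rw [heven, hodd, psiSum_succ_natCast_div, sum_add_distrib, sum_exp_psiSum_succ_midpoint]
    rw [add_right_comm, ← sum_range_succ, ih]
    ring

noncomputable def dyadicMajorant (n k : ℕ) : ℝ :=
  ∏ ℓ ∈ range n,
    (1 + 2 ^ ℓ / 2 ^ n) * (oneSubCos (2 ^ ℓ * (k / 2 ^ n)) + 2 * π ^ 2 * (2 ^ ℓ / 2 ^ n))

lemma dyadicMajorant_nonneg (n k : ℕ) : 0 ≤ dyadicMajorant n k :=
  prod_nonneg fun _ _ =>
    mul_nonneg (by positivity) (add_nonneg (oneSubCos_nonneg _) (by positivity))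

lemma oneSubCos_le_of_mem_Icc {n k : ℕ} {y : ℝ}
    (hy : y ∈ Set.Icc ((k : ℝ) / 2 ^ n) ((k + 1) / 2 ^ n)) (ℓ : ℕ) : oneSubCos (2 ^ ℓ * y) ≤
      (1 + 2 ^ ℓ / 2 ^ n) * (oneSubCos (2 ^ ℓ * (k / 2 ^ n)) + 2 * π ^ 2 * (2 ^ ℓ / 2 ^ n)) := by
  set d : ℝ := 2 ^ ℓ / 2 ^ n
  have hd : 0 < d := by positivity
  have hdist : |2 ^ ℓ * y - 2 ^ ℓ * (k / 2 ^ n)| ≤ d := by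
    rw [← mul_sub, abs_mul, abs_of_pos (by positivity), abs_of_nonneg (by linarith [hy.1])]
    have : y - k / 2 ^ n ≤ 1 / 2 ^ n := by linarith [hy.2, add_div (k : ℝ) 1 (2 ^ n)]
    calc (2 : ℝ) ^ ℓ * (y - k / 2 ^ n) ≤ 2 ^ ℓ * (1 / 2 ^ n) := by gcongr
      _ = d := by ring
  have := oneSubCos_le_of_abs_sub_le hd hdist
  rwa [show 2 * π ^ 2 * d ^ 2 / d = 2 * π ^ 2 * d by field_simp] at this

lemma exp_psiSum_le_of_mem_Icc {n k : ℕ} {y : ℝ}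
    (hy : y ∈ Set.Icc ((k : ℝ) / 2 ^ n) ((k + 1) / 2 ^ n)) :
    exp (psiSum n y) ≤
      dyadicMajorant n k + exp (psiSum n (k / 2 ^ n)) + exp (psiSum n ((k + 1 : ℕ) / 2 ^ n)) := by
  have hE : ∀ j : ℕ, 0 ≤ exp (psiSum n (j / 2 ^ n)) := fun _ => (exp_pos _).le
  by_cases hne : ∀ ℓ < n, oneSubCos (2 ^ ℓ * y) ≠ 0
  · have : exp (psiSum n y) ≤ dyadicMajorant n k := by
      rw [exp_psiSum_of_ne_zero hne]
      exact prod_le_prod (fun _ _ => oneSubCos_nonneg _) fun ℓ _ => oneSubCos_le_of_mem_Icc hy ℓ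
    linarith [hE k, hE (k + 1)]
  -- otherwise `y` is a dyadic point of level `n`, hence an endpoint of the interval
  push Not at hne
  obtain ⟨ℓ, hℓ, hzero⟩ := hne
  obtain ⟨z, rfl⟩ := exists_eq_intCast_div_of_oneSubCos_eq_zero hℓ.le hzero
  obtain ⟨hlo, hhi⟩ := hy
  rw [div_le_div_iff_of_pos_right (by positivity)] at hlo hhi
  have hz : z = k ∨ z = ((k + 1 : ℕ) : ℤ) := by
    have : (k : ℤ) ≤ z ∧ z ≤ k + 1 := ⟨by exact_mod_cast hlo, by exact_mod_cast hhi⟩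
    omega
  have hM := dyadicMajorant_nonneg n k
  rcases hz with rfl | rfl
  · rw [Int.cast_natCast]; linarith [hE (k + 1)]
  · rw [Int.cast_natCast]; linarith [hE k]

lemma sum_two_pow_div_two_pow_le_one (n : ℕ) : ∑ ℓ ∈ range n, (2 : ℝ) ^ ℓ / 2 ^ n ≤ 1 := by
  rw [← sum_div, geom_sum_eq (by norm_num), div_le_one (by positivity)]
  linarith

lemma sum_dyadicMajorant_le (n : ℕ) :
    ∑ k ∈ range (2 ^ n), dyadicMajorant n k ≤ exp (1 + 2 * π ^ 2) * 2 ^ n := by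
  set d : ℕ → ℝ := fun ℓ => 2 ^ ℓ / 2 ^ n
  have hd : ∀ ℓ, 0 ≤ d ℓ := fun _ => by positivity
  have hsum : ∑ ℓ ∈ range n, d ℓ ≤ 1 := sum_two_pow_div_two_pow_le_one n
  have hident := sum_prod_add_oneSubCos (le_refl n) (fun ℓ => 2 * π ^ 2 * d ℓ) 0
  simp only [add_zero] at hident
  have h1 : ∏ ℓ ∈ range n, (1 + d ℓ) ≤ exp 1 :=
    (prod_one_add_le_exp_sum _ hd).trans (exp_le_exp.mpr hsum)
  have h2 : ∏ ℓ ∈ range n, (2 * π ^ 2 * d ℓ + 1) ≤ exp (2 * π ^ 2) := by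
    simp_rw [add_comm _ (1 : ℝ)]
    refine (prod_one_add_le_exp_sum _ fun ℓ => by positivity).trans (exp_le_exp.mpr ?_)
    rw [← mul_sum]
    nlinarith [pi_pos]
  calc ∑ k ∈ range (2 ^ n), dyadicMajorant n k
      = (∏ ℓ ∈ range n, (1 + d ℓ)) * (2 ^ n * ∏ ℓ ∈ range n, (2 * π ^ 2 * d ℓ + 1)) := by
        simp_rw [dyadicMajorant, prod_mul_distrib, ← mul_sum, ← hident]
        simp_rw [add_comm (oneSubCos _)]
        rfl
    _ ≤ exp 1 * (2 ^ n * exp (2 * π ^ 2)) := by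
        gcongr
    _ = exp (1 + 2 * π ^ 2) * 2 ^ n := by rw [exp_add]; ring

lemma two_pow_le_A (n : ℕ) : ENNReal.ofReal (2 ^ n) ≤ A n := by
  have hmid : ∀ k : ℕ, ((k : ℝ) + 1 / 2) / 2 ^ n ∈ Set.Icc ((k : ℝ) / 2 ^ n) ((k + 1) / 2 ^ n) :=
    fun k => ⟨by gcongr; linarith, by gcongr; linarith⟩
  rw [← sum_exp_psiSum_midpoint n, ENNReal.ofReal_sum_of_nonneg fun _ _ => (exp_pos _).le]
  exact sum_le_sum fun k _ => le_iSup₂_of_le _ (hmid k) le_rfl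

lemma A_le (n : ℕ) : A n ≤ ENNReal.ofReal ((exp (1 + 2 * π ^ 2) + 4) * 2 ^ n) := by
  set E : ℕ → ℝ := fun j => exp (psiSum n (j / 2 ^ n))
  have hE : ∀ j, 0 ≤ E j := fun _ => (exp_pos _).le
  have hdyadic : ∑ j ∈ range (2 ^ n + 1), E j = 2 ^ (n + 1) := sum_exp_psiSum_dyadic n
  have hleft : ∑ k ∈ range (2 ^ n), E k ≤ 2 ^ (n + 1) := by
    rw [← hdyadic, sum_range_succ]; linarith [hE (2 ^ n)]
  have hright : ∑ k ∈ range (2 ^ n), E (k + 1) ≤ 2 ^ (n + 1) := by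
    rw [← hdyadic, sum_range_succ']; linarith [hE 0]
  calc A n ≤ ∑ k ∈ range (2 ^ n), ENNReal.ofReal (dyadicMajorant n k + E k + E (k + 1)) :=
        sum_le_sum fun k _ => iSup₂_le fun y hy =>
          ENNReal.ofReal_le_ofReal (exp_psiSum_le_of_mem_Icc hy)
    _ = ENNReal.ofReal (∑ k ∈ range (2 ^ n), (dyadicMajorant n k + E k + E (k + 1))) :=
        (ENNReal.ofReal_sum_of_nonneg fun k _ =>
          add_nonneg (add_nonneg (dyadicMajorant_nonneg n k) (hE k)) (hE (k + 1))).symm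
    _ ≤ ENNReal.ofReal ((exp (1 + 2 * π ^ 2) + 4) * 2 ^ n) := by
        gcongr
        rw [sum_add_distrib, sum_add_distrib]
        linarith [sum_dyadicMajorant_le n, pow_succ (2 : ℝ) n]

lemma Real.tendsto_log_div_of_le_of_le {b : ℕ → ℝ} {r c C : ℝ} (hr : 0 < r) (hc : 0 < c)
    (hlow : ∀ n, c * r ^ n ≤ b n) (hup : ∀ n, b n ≤ C * r ^ n) :
    Tendsto (fun n : ℕ => log (b n) / n) atTop (𝓝 (log r)) := by
  have hC : 0 < C := pos_of_mul_pos_left ((mul_pos hc (pow_pos hr 0)).trans_le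
    ((hlow 0).trans (hup 0))) (pow_pos hr 0).le
  have hlim : ∀ a : ℝ, Tendsto (fun n : ℕ => log r + a / n) atTop (𝓝 (log r)) := fun a => by
    simpa using tendsto_const_nhds.add (tendsto_const_div_atTop_nhds_zero_nat a)
  have hbound : ∀ {a : ℝ}, 0 < a → ∀ n : ℕ, 0 < n → log (a * r ^ n) / n = log r + log a / n :=
    fun ha n hn => by
      rw [log_mul ha.ne' (pow_pos hr n).ne', log_pow]
      field_simp
      ring
  have hb : ∀ n, 0 < b n := fun n => (mul_pos hc (pow_pos hr n)).trans_le (hlow n)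
  refine tendsto_of_tendsto_of_tendsto_of_le_of_le' (hlim (log c)) (hlim (log C)) ?_ ?_
  · filter_upwards [eventually_gt_atTop 0] with n hn
    rw [← hbound hc n hn]
    gcongr
    exact hlow n
  · filter_upwards [eventually_gt_atTop 0] with n hn
    rw [← hbound hC n hn]
    gcongr
    exacts [hb n, hup n]

lemma ENNReal.tendsto_log_div_of_le_of_le {a : ℕ → ENNReal} {r c C : ℝ} (hr : 0 < r) (hc : 0 < c)
    (hlow : ∀ n, ENNReal.ofReal (c * r ^ n) ≤ a n) (hup : ∀ n, a n ≤ ENNReal.ofReal (C * r ^ n)) :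
    Tendsto (fun n : ℕ => ENNReal.log (a n) / (n : EReal)) atTop (𝓝 (Real.log r : EReal)) := by
  have hpos : ∀ n, 0 < c * r ^ n := fun n => by positivity
  have hfin : ∀ n, a n ≠ ⊤ := fun n => ne_top_of_le_ne_top ofReal_ne_top (hup n)
  have hlow' : ∀ n, c * r ^ n ≤ (a n).toReal := fun n =>
    (ofReal_le_iff_le_toReal (hfin n)).mp (hlow n)
  have hup' : ∀ n, (a n).toReal ≤ C * r ^ n := fun n =>
    toReal_le_of_le_ofReal (ofReal_pos.mp ((ofReal_pos.mpr (hpos n)).trans_le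
      ((hlow n).trans (hup n)))).le (hup n)
  have hlog : ∀ n : ℕ,
      ENNReal.log (a n) / (n : EReal) = ((Real.log (a n).toReal / n : ℝ) : EReal) := fun n => by
    rw [← ofReal_toReal (hfin n), log_ofReal_of_pos ((hpos n).trans_le (hlow' n)), EReal.coe_div,
      toReal_ofReal ((hpos n).trans_le (hlow' n)).le]
    rfl
  simp_rw [hlog]
  exact EReal.tendsto_coe.mpr (Real.tendsto_log_div_of_le_of_le hr hc hlow' hup')

/-- The pressure at `t = 1` equals `log 2`. -/
theorem pressure_at_one :
    Filter.Tendsto (fun n : ℕ => ENNReal.log (A n) / (n : EReal)) Filter.atTop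
      (nhds ((Real.log 2 : ℝ) : EReal)) :=
  ENNReal.tendsto_log_div_of_le_of_le two_pos one_pos (fun n => by simpa using two_pow_le_A n) A_le
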